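/- Let T_1, T_2, …, T_{2^n} be a total ordering of all subsets of N = {1,…,n} such that T_i ⊆ T_j implies i ≤ j. Then every element q of the pure braid group P_n can be written as a product q = q_1 q_2 ⋯ q_{2^n}, where for each i the element q_i is a (possibly empty) product of monic commutators each of whose support equals T_i. -/

import Mathlib

/-!
Common setup: the pure braid group `P_n` as a presented group, the subgroups
`P_S` and `Q_S`, the characterization of the homomorphisms `φ_S`, the support
`σ(x)`, and monic commutators.
-/

/-- The free-group generator corresponding to the pure braid generator
`p_{a,b}` for `a < b` (indices in `Fin n`, so strand `i+1` of `{1,…,n}`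
corresponds to `i : Fin n`). -/
def pf {n : ℕ} (a b : Fin n) (h : a < b) :
    FreeGroup {q : Fin n × Fin n // q.1 < q.2} :=
  FreeGroup.of ⟨(a, b), h⟩

/-- The defining relations (A), (B), (C) of the pure braid group `P_n`,
each written in the form `lhs⁻¹ * rhs` for an equation `lhs = rhs`. -/
def braidRels (n : ℕ) : Set (FreeGroup {q : Fin n × Fin n // q.1 < q.2}) :=
  -- (A) first equality: p_{a,b} p_{a,c} p_{b,c} = p_{a,c} p_{b,c} p_{a,b}
  {r | ∃ (a b c : Fin n) (hab : a < b) (hbc : b < c),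
      r = (pf a b hab * pf a c (hab.trans hbc) * pf b c hbc)⁻¹ *
          (pf a c (hab.trans hbc) * pf b c hbc * pf a b hab)} ∪
  -- (A) second equality: p_{a,b} p_{a,c} p_{b,c} = p_{b,c} p_{a,b} p_{a,c}
  {r | ∃ (a b c : Fin n) (hab : a < b) (hbc : b < c),
      r = (pf a b hab * pf a c (hab.trans hbc) * pf b c hbc)⁻¹ *
          (pf b c hbc * pf a b hab * pf a c (hab.trans hbc))} ∪
  -- (B) first: p_{a,b} p_{c,d} = p_{c,d} p_{a,b}
  {r | ∃ (a b c d : Fin n) (hab : a < b) (hbc : b < c) (hcd : c < d),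
      r = (pf a b hab * pf c d hcd)⁻¹ * (pf c d hcd * pf a b hab)} ∪
  -- (B) second: p_{a,d} p_{b,c} = p_{b,c} p_{a,d}
  {r | ∃ (a b c d : Fin n) (hab : a < b) (hbc : b < c) (hcd : c < d),
      r = (pf a d (hab.trans (hbc.trans hcd)) * pf b c hbc)⁻¹ *
          (pf b c hbc * pf a d (hab.trans (hbc.trans hcd)))} ∪
  -- (C): p_{a,c} (p_{b,c}⁻¹ p_{b,d} p_{b,c}) = (p_{b,c}⁻¹ p_{b,d} p_{b,c}) p_{a,c}
  {r | ∃ (a b c d : Fin n) (hab : a < b) (hbc : b < c) (hcd : c < d),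
      r = (pf a c (hab.trans hbc) * ((pf b c hbc)⁻¹ * pf b d (hbc.trans hcd) * pf b c hbc))⁻¹ *
          ((pf b c hbc)⁻¹ * pf b d (hbc.trans hcd) * pf b c hbc * pf a c (hab.trans hbc))}

/-- The pure braid group `P_n`, given by the presentation above. -/
abbrev PB (n : ℕ) := PresentedGroup (braidRels n)

/-- The generator `p_{a,b}` of the pure braid group, for `a < b`. -/
def p {n : ℕ} (a b : Fin n) (h : a < b) : PB n := PresentedGroup.of ⟨(a, b), h⟩

/-- `P_S`: the subgroup of `P_n` generated by all `p_{a,b}` with `a ∈ S` and `b ∈ S`. -/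
def PS {n : ℕ} (S : Set (Fin n)) : Subgroup (PB n) :=
  Subgroup.closure {x | ∃ (a b : Fin n) (h : a < b), a ∈ S ∧ b ∈ S ∧ x = p a b h}

/-- `Q_S`: the subgroup of `P_n` generated by all `p_{a,b}` with `a ∈ S` or `b ∈ S`. -/
def QS {n : ℕ} (S : Set (Fin n)) : Subgroup (PB n) :=
  Subgroup.closure {x | ∃ (a b : Fin n) (h : a < b), (a ∈ S ∨ b ∈ S) ∧ x = p a b h}

/-- `IsPhi S φ` says that `φ : P_n → P_n` is the homomorphism `φ_S`, i.e. it sends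
`p_{a,b}` to itself if `a ∉ S` and `b ∉ S`, and to `1` otherwise. -/
def IsPhi {n : ℕ} (S : Set (Fin n)) (φ : PB n →* PB n) : Prop :=
  ∀ (a b : Fin n) (h : a < b),
    (a ∉ S ∧ b ∉ S → φ (p a b h) = p a b h) ∧ ((a ∈ S ∨ b ∈ S) → φ (p a b h) = 1)

/-- The support `σ(x)` of `x ∈ P_n`: the intersection of all `S` with `x ∈ P_S`. -/
def support {n : ℕ} (x : PB n) : Set (Fin n) := ⋂₀ {S | x ∈ PS S}

/-- Monic commutators: the smallest set of elements of `P_n` containing all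
`p_{a,b}` and `p_{a,b}⁻¹` and closed under taking nontrivial commutators
`[x,y] = x⁻¹ y⁻¹ x y`. -/
inductive IsMonic {n : ℕ} : PB n → Prop
  | of (a b : Fin n) (h : a < b) : IsMonic (p a b h)
  | inv (a b : Fin n) (h : a < b) : IsMonic (p a b h)⁻¹
  | comm (x y : PB n) : IsMonic x → IsMonic y → x⁻¹ * y⁻¹ * x * y ≠ 1 →
      IsMonic (x⁻¹ * y⁻¹ * x * y)

/-!
A monic commutator `x` is Brunnian on its support `S`: it lies in `P_S`, is nontrivial, and is
killed by `φ_{a}` for every `a ∈ S`. Brunnian-ness on `S` and on `U` passes to a nontrivial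
commutator on `S ∪ U`, so `σ([x, y]) = σ(x) ∪ σ(y)` for monic `x` and `y`. Consequently the
subgroup `R_k` generated by the monic commutators of support `T_i`, `i ≥ k`, is normal: for monic
`y`, `y⁻¹ x y = x [x, y]` and `[x, y]` is trivial or has support containing `σ(x)`. Hence
`R_k = C_k R_{k+1}` with `C_k` generated by the monic commutators of support `T_k`, and descending
from `R_0 = P_n` to `R_{2^n} = 1` collects `q` into the required product.
-/

open scoped Pointwise

theorem Subgroup.normal_closure_of_conj_mem {G : Type*} [Group G] {S Y : Set G}
    (hY : Subgroup.closure Y = ⊤) (hYinv : ∀ y ∈ Y, y⁻¹ ∈ Y)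
    (hS : ∀ y ∈ Y, ∀ s ∈ S, y⁻¹ * s * y ∈ Subgroup.closure S) :
    (Subgroup.closure S).Normal := by
  have hconj : ∀ y ∈ Y, ∀ h ∈ Subgroup.closure S, y⁻¹ * h * y ∈ Subgroup.closure S :=
    fun y hy h hh => by
      simpa using (Subgroup.closure_le ((Subgroup.closure S).comap (MulAut.conj y⁻¹).toMonoidHom)).2
        (fun s hs => by simpa using hS y hy s hs) hh
  rw [← Subgroup.normalizer_eq_top_iff, eq_top_iff, ← hY, Subgroup.closure_le]
  intro y hy h
  refine ⟨fun hh => by simpa using hconj _ (hYinv y hy) h hh, fun hh => ?_⟩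
  simpa [mul_assoc] using hconj y hy _ hh

theorem Set.subset_prod_list_ofFn {G : Type*} [Monoid G] {m : ℕ} (C : Fin m → Set G)
    (D : ℕ → Set G) (hstep : ∀ i : Fin m, D i ⊆ C i * D (i + 1)) (hlast : D m ⊆ 1) :
    D 0 ⊆ (List.ofFn C).prod := by
  induction m generalizing D with
  | zero => simpa using hlast
  | succ m ih =>
    rw [List.ofFn_succ, List.prod_cons]
    refine (hstep 0).trans (Set.mul_subset_mul_left ?_)
    exact ih (fun i => C i.succ) (fun k => D (k + 1)) (fun i => by simpa using hstep i.succ) hlast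

section

variable {n : ℕ}

theorem mk_eq_mk_of_inv_mul_mem_braidRels {u v : FreeGroup {q : Fin n × Fin n // q.1 < q.2}}
    (h : u⁻¹ * v ∈ braidRels n) : PresentedGroup.mk (braidRels n) u = PresentedGroup.mk _ v :=
  QuotientGroup.eq.mpr (Subgroup.subset_normalClosure h)

theorem relA₁ (a b c : Fin n) (hab : a < b) (hbc : b < c) :
    p a b hab * p a c (hab.trans hbc) * p b c hbc =
      p a c (hab.trans hbc) * p b c hbc * p a b hab :=
  mk_eq_mk_of_inv_mul_mem_braidRels (.inl (.inl (.inl (.inl ⟨a, b, c, hab, hbc, rfl⟩))))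

theorem relA₂ (a b c : Fin n) (hab : a < b) (hbc : b < c) :
    p a b hab * p a c (hab.trans hbc) * p b c hbc =
      p b c hbc * p a b hab * p a c (hab.trans hbc) :=
  mk_eq_mk_of_inv_mul_mem_braidRels (.inl (.inl (.inl (.inr ⟨a, b, c, hab, hbc, rfl⟩))))

theorem relB₁ (a b c d : Fin n) (hab : a < b) (hbc : b < c) (hcd : c < d) :
    p a b hab * p c d hcd = p c d hcd * p a b hab :=
  mk_eq_mk_of_inv_mul_mem_braidRels (.inl (.inl (.inr ⟨a, b, c, d, hab, hbc, hcd, rfl⟩)))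

theorem relB₂ (a b c d : Fin n) (hab : a < b) (hbc : b < c) (hcd : c < d) :
    p a d (hab.trans (hbc.trans hcd)) * p b c hbc =
      p b c hbc * p a d (hab.trans (hbc.trans hcd)) :=
  mk_eq_mk_of_inv_mul_mem_braidRels (.inl (.inr ⟨a, b, c, d, hab, hbc, hcd, rfl⟩))

theorem relC (a b c d : Fin n) (hab : a < b) (hbc : b < c) (hcd : c < d) :
    p a c (hab.trans hbc) * ((p b c hbc)⁻¹ * p b d (hbc.trans hcd) * p b c hbc) =
      (p b c hbc)⁻¹ * p b d (hbc.trans hcd) * p b c hbc * p a c (hab.trans hbc) :=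
  mk_eq_mk_of_inv_mul_mem_braidRels (.inr ⟨a, b, c, d, hab, hbc, hcd, rfl⟩)

noncomputable def expSum : PB n →* Multiplicative ℤ :=
  PresentedGroup.toGroup (f := fun _ => Multiplicative.ofAdd 1) <| by
    rintro r (((((⟨a, b, c, hab, hbc, rfl⟩ | ⟨a, b, c, hab, hbc, rfl⟩) |
      ⟨a, b, c, d, hab, hbc, hcd, rfl⟩) | ⟨a, b, c, d, hab, hbc, hcd, rfl⟩) |
      ⟨a, b, c, d, hab, hbc, hcd, rfl⟩)) <;>
    simp only [pf, map_mul, map_inv, FreeGroup.lift_apply_of]; group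

theorem p_ne_one (a b : Fin n) (h : a < b) : p a b h ≠ 1 := fun h1 => by
  simpa [expSum, p, PresentedGroup.toGroup.of] using congrArg expSum h1

open Classical in
noncomputable def phi (S : Set (Fin n)) : PB n →* PB n :=
  PresentedGroup.toGroup
    (f := fun g => if g.1.1 ∈ S ∨ g.1.2 ∈ S then 1 else p g.1.1 g.1.2 g.2) <| by
    rintro r (((((⟨a, b, c, hab, hbc, rfl⟩ | ⟨a, b, c, hab, hbc, rfl⟩) |
      ⟨a, b, c, d, hab, hbc, hcd, rfl⟩) | ⟨a, b, c, d, hab, hbc, hcd, rfl⟩) |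
      ⟨a, b, c, d, hab, hbc, hcd, rfl⟩)) <;>
    simp only [pf, map_mul, map_inv, FreeGroup.lift_apply_of, inv_mul_eq_one]
    · split_ifs <;> simp_all [relA₁ a b c hab hbc]
    · split_ifs <;> simp_all [relA₂ a b c hab hbc]
    · split_ifs <;> simp_all [relB₁ a b c d hab hbc hcd]
    · split_ifs <;> simp_all [relB₂ a b c d hab hbc hcd]
    · split_ifs <;> simp_all [relC a b c d hab hbc hcd]

theorem isPhi_phi (S : Set (Fin n)) : IsPhi S (phi S) := fun a b h =>
  ⟨fun hab => by simp [phi, p, PresentedGroup.toGroup.of, hab.1, hab.2],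
    fun hab => by simp [phi, p, PresentedGroup.toGroup.of, hab]⟩

theorem PS_mono {S U : Set (Fin n)} (h : S ⊆ U) : PS S ≤ PS U :=
  Subgroup.closure_mono fun _ ⟨a, b, hab, ha, hb, hx⟩ => ⟨a, b, hab, h ha, h hb, hx⟩

theorem phi_eq_self_of_mem_PS {S U : Set (Fin n)} (hSU : Disjoint S U) {x : PB n}
    (hx : x ∈ PS U) : phi S x = x :=
  MonoidHom.eqOn_closure (f := phi S) (g := MonoidHom.id _)
    (by
      rintro _ ⟨a, b, h, ha, hb, rfl⟩
      exact (isPhi_phi S a b h).1 ⟨hSU.notMem_of_mem_right ha, hSU.notMem_of_mem_right hb⟩)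
    hx

def IsBrunnianOn (x : PB n) (S : Set (Fin n)) : Prop :=
  x ∈ PS S ∧ x ≠ 1 ∧ ∀ a ∈ S, phi {a} x = 1

namespace IsBrunnianOn

variable {x y : PB n} {S U : Set (Fin n)}

theorem support_eq (hx : IsBrunnianOn x S) : support x = S := by
  refine subset_antisymm (Set.sInter_subset_of_mem hx.1) fun a ha => Set.mem_sInter.2 fun V hV => ?_
  by_contra haV
  have hfix := phi_eq_self_of_mem_PS (Set.disjoint_singleton_left.2 haV) hV
  exact hx.2.1 (hfix.symm.trans (hx.2.2 a ha))

theorem inv (hx : IsBrunnianOn x S) : IsBrunnianOn x⁻¹ S :=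
  ⟨inv_mem hx.1, inv_ne_one.2 hx.2.1, fun a ha => by rw [map_inv, hx.2.2 a ha, inv_one]⟩

theorem commutator (hx : IsBrunnianOn x S) (hy : IsBrunnianOn y U)
    (hne : x⁻¹ * y⁻¹ * x * y ≠ 1) : IsBrunnianOn (x⁻¹ * y⁻¹ * x * y) (S ∪ U) := by
  have hxSU : x ∈ PS (S ∪ U) := PS_mono Set.subset_union_left hx.1
  have hySU : y ∈ PS (S ∪ U) := PS_mono Set.subset_union_right hy.1
  refine ⟨mul_mem (mul_mem (mul_mem (inv_mem hxSU) (inv_mem hySU)) hxSU) hySU, hne, ?_⟩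
  rintro a (ha | ha)
  · simp [hx.2.2 a ha]
  · simp [hy.2.2 a ha]

end IsBrunnianOn

theorem isBrunnianOn_p (a b : Fin n) (h : a < b) : IsBrunnianOn (p a b h) {a, b} :=
  ⟨Subgroup.subset_closure ⟨a, b, h, by simp, by simp, rfl⟩, p_ne_one a b h,
    fun c hc => (isPhi_phi {c} a b h).2 (by rcases hc with rfl | rfl <;> simp)⟩

theorem IsMonic.exists_isBrunnianOn {x : PB n} (hx : IsMonic x) : ∃ S, IsBrunnianOn x S := by
  induction hx with
  | of a b h => exact ⟨_, isBrunnianOn_p a b h⟩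
  | inv a b h => exact ⟨_, (isBrunnianOn_p a b h).inv⟩
  | comm x y _ _ hne ihx ihy =>
    obtain ⟨S, hS⟩ := ihx
    obtain ⟨U, hU⟩ := ihy
    exact ⟨_, hS.commutator hU hne⟩

theorem support_subset_support_commutator {x y : PB n} (hx : IsMonic x) (hy : IsMonic y)
    (hne : x⁻¹ * y⁻¹ * x * y ≠ 1) : support x ⊆ support (x⁻¹ * y⁻¹ * x * y) := by
  obtain ⟨S, hS⟩ := hx.exists_isBrunnianOn
  obtain ⟨U, hU⟩ := hy.exists_isBrunnianOn
  rw [hS.support_eq, (hS.commutator hU hne).support_eq]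
  exact Set.subset_union_left

theorem support_inv (x : PB n) : support x⁻¹ = support x := by
  simp [support, inv_mem_iff]

theorem isMonic_inv_iff {x : PB n} : IsMonic x⁻¹ ↔ IsMonic x := by
  have hinv {x : PB n} (hx : IsMonic x) : IsMonic x⁻¹ := by
    cases hx with
    | of a b h => exact .inv a b h
    | inv a b h => simpa using IsMonic.of a b h
    | comm x y hx hy hne =>
      have hcomm : (x⁻¹ * y⁻¹ * x * y)⁻¹ = y⁻¹ * x⁻¹ * y * x := by group
      refine hcomm ▸ .comm y x hy hx fun h1 => hne ?_
      rw [← inv_inv (x⁻¹ * y⁻¹ * x * y), hcomm, h1, inv_one]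
  exact ⟨fun h => inv_inv x ▸ hinv h, hinv⟩

theorem closure_setOf_isMonic : Subgroup.closure {x : PB n | IsMonic x} = ⊤ := by
  rw [eq_top_iff, ← PresentedGroup.closure_range_of]
  exact Subgroup.closure_mono (by rintro _ ⟨⟨⟨a, b⟩, h⟩, rfl⟩; exact IsMonic.of a b h)

end

section Filtration

variable {n m : ℕ} (T : Fin m → Set (Fin n))

def classSubgroup (i : Fin m) : Subgroup (PB n) :=
  Subgroup.closure {x | IsMonic x ∧ support x = T i}

def tailSubgroup (k : ℕ) : Subgroup (PB n) :=
  Subgroup.closure {x | IsMonic x ∧ ∃ i : Fin m, k ≤ i ∧ support x = T i}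

theorem tailSubgroup_zero (hT : Function.Surjective T) : tailSubgroup T 0 = ⊤ := by
  rw [eq_top_iff, ← closure_setOf_isMonic]
  refine Subgroup.closure_mono fun x hx => ⟨hx, ?_⟩
  obtain ⟨i, hi⟩ := hT (support x)
  exact ⟨i, Nat.zero_le _, hi.symm⟩

theorem tailSubgroup_eq_bot : tailSubgroup T m = ⊥ :=
  Subgroup.closure_eq_bot_iff.2 fun _ ⟨_, i, hi, _⟩ => absurd i.isLt (not_lt.2 hi)

theorem tailSubgroup_normal (hT : Function.Surjective T) (hord : ∀ i j, T i ⊆ T j → i ≤ j)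
    (k : ℕ) : (tailSubgroup T k).Normal := by
  refine Subgroup.normal_closure_of_conj_mem closure_setOf_isMonic
    (fun y hy => isMonic_inv_iff.2 hy) fun y hy x ⟨hx, i, hki, hxi⟩ => ?_
  have hconj : y⁻¹ * x * y = x * (x⁻¹ * y⁻¹ * x * y) := by group
  rw [hconj]
  refine mul_mem (Subgroup.subset_closure ⟨hx, i, hki, hxi⟩) ?_
  by_cases hne : x⁻¹ * y⁻¹ * x * y = 1
  · rw [hne]
    exact one_mem _
  obtain ⟨j, hj⟩ := hT (support (x⁻¹ * y⁻¹ * x * y))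
  have hij : i ≤ j := hord i j (hxi ▸ hj ▸ support_subset_support_commutator hx hy hne)
  exact Subgroup.subset_closure ⟨.comm x y hx hy hne, j, hki.trans hij, hj.symm⟩

theorem tailSubgroup_eq_sup (i : Fin m) :
    tailSubgroup T i = classSubgroup T i ⊔ tailSubgroup T (i + 1) := by
  rw [classSubgroup, tailSubgroup, tailSubgroup, ← Subgroup.closure_union]
  congr 1
  ext x
  simp only [Set.mem_ofPred_eq, Set.mem_union]
  constructor
  · rintro ⟨hx, j, hij, hj⟩
    rcases hij.eq_or_lt with hij | hij
    · exact .inl ⟨hx, hj.trans (congrArg T (Fin.ext hij.symm))⟩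
    · exact .inr ⟨hx, j, hij, hj⟩
  · rintro (⟨hx, hi⟩ | ⟨hx, j, hij, hj⟩)
    · exact ⟨hx, i, le_rfl, hi⟩
    · exact ⟨hx, j, (Nat.le_succ _).trans hij, hj⟩

theorem exists_list_of_mem_classSubgroup {i : Fin m} {x : PB n} (hx : x ∈ classSubgroup T i) :
    ∃ l : List (PB n), (∀ y ∈ l, IsMonic y ∧ support y = T i) ∧ x = l.prod := by
  rw [classSubgroup, ← Subgroup.mem_toSubmonoid, Subgroup.closure_toSubmonoid] at hx
  obtain ⟨l, hl, rfl⟩ := Submonoid.exists_list_of_mem_closure hx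
  refine ⟨l, fun y hy => ?_, rfl⟩
  rcases hl y hy with hy | ⟨hy, hyT⟩
  · exact hy
  · exact ⟨isMonic_inv_iff.1 hy, support_inv y ▸ hyT⟩

end Filtration

theorem collection_general (n : ℕ) (T : Fin (2 ^ n) → Set (Fin n))
    (hbij : Function.Bijective T)
    (hord : ∀ i j, T i ⊆ T j → i ≤ j)
    (q : PB n) :
    ∃ qs : Fin (2 ^ n) → PB n,
      q = (List.ofFn qs).prod ∧
      ∀ i, ∃ l : List (PB n),
        (∀ x ∈ l, IsMonic x ∧ support x = T i) ∧ qs i = l.prod := by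
  have hstep (i : Fin (2 ^ n)) :
      (tailSubgroup T i : Set (PB n)) ⊆ classSubgroup T i * tailSubgroup T (i + 1) := by
    have := tailSubgroup_normal T hbij.2 hord (i + 1)
    rw [tailSubgroup_eq_sup, Subgroup.mul_normal]
  have hq : q ∈ (List.ofFn fun i => (classSubgroup T i : Set (PB n))).prod :=
    Set.subset_prod_list_ofFn _ (fun k => tailSubgroup T k) hstep
      (by simp [tailSubgroup_eq_bot]) (by simp [tailSubgroup_zero T hbij.2])
  obtain ⟨qs, hqs⟩ := Set.mem_prod_list_ofFn.1 hq
  exact ⟨fun i => qs i, hqs.symm, fun i => exists_list_of_mem_classSubgroup T (qs i).2⟩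

/-- given a total ordering `T₁, …, T_{2^n}` of all subsets of `N`
such that `T i ⊆ T j` implies `i ≤ j`, every `q ∈ P_n` can be written as a
product `q = q₁ q₂ ⋯ q_{2^n}` where each `qᵢ` is a (possibly empty) product of
monic commutators each of whose support equals `T i`. -/
theorem collection (n : ℕ) (hn : 0 < n) (T : Fin (2 ^ n) → Set (Fin n))
    (hbij : Function.Bijective T)
    (hord : ∀ i j, T i ⊆ T j → i ≤ j)
    (q : PB n) :
    ∃ qs : Fin (2 ^ n) → PB n,
      q = (List.ofFn qs).prod ∧
      ∀ i, ∃ l : List (PB n),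
        (∀ x ∈ l, IsMonic x ∧ support x = T i) ∧ qs i = l.prod :=
  collection_general n T hbij hord q
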